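/- Let σ̂_1 ∈ Aut(F_n) be the automorphism taking x_1 to x_1^2 x_2, x_2 to x_2^{−1} x_1^{−1} x_2, and fixing all other free generators. If w ∈ F_n has reduced word of the form x_1^2 u, where u is a reduced word that does not begin with a letter x_1^{±1}, then the reduced word of σ̂_1(w) is of the form x_1^2 u', where u' is a reduced word that does not begin with a letter x_1^{±1}. -/

import Mathlib

/-!
Write `a = x₁`, `b = x₂`. Since `σ̂(a) = a²b`, we have `σ̂(a²u) = a² · b σ̂(au)`, and `au` is
reduced because `u` does not begin with `a⁻¹`. So it suffices that the reduced word of `σ̂(v)`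
never begins with `b⁻¹` when `v` is a reduced word beginning with `a`.

This is proved by reading `v` from the right. The first letter of a reduced word `v` determines a
prefix pattern of the reduced word of `σ̂(v)`. Prepending a letter `ℓ` to `v`
multiplies `σ̂(v)` on the left by the image of `ℓ`; its cancellation stays inside that pattern
and leaves the pattern attached to `ℓ`.
-/

namespace FreeGroup

variable {α : Type*}

theorem mk_cons (x : α) (e : Bool) (L : List (α × Bool)) :
    mk ((x, e) :: L) = cond e (of x) (of x)⁻¹ * mk L := by
  rw [show (x, e) :: L = [(x, e)] ++ L from rfl, ← mul_mk]
  cases e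
  · rw [of, inv_mk]; rfl
  · rfl

theorem isReduced_cons {x : α × Bool} {L : List (α × Bool)} :
    IsReduced (x :: L) ↔ (x.1, !x.2) ∉ L.head? ∧ IsReduced L := by
  cases L with
  | nil => simp
  | cons y L =>
    rw [isReduced_cons_cons]
    obtain ⟨x, e⟩ := x
    obtain ⟨y, f⟩ := y
    cases e <;> cases f <;> simp [eq_comm]

theorem IsReduced.of_cons {x : α × Bool} {L : List (α × Bool)} (h : IsReduced (x :: L)) :
    IsReduced L :=
  (isReduced_cons.1 h).2

end FreeGroup

namespace SigmaHat

open FreeGroup List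

variable {α : Type*}

/-- `ImageShape a b m q`: `q` has the shape of the reduced word of `σ̂(v)`, where
`σ̂ : a ↦ a²b, b ↦ b⁻¹a⁻¹b` fixes the other generators and `v` is a reduced word with first
letter `m` (`none` for the empty word). -/
inductive ImageShape (a b : α) : Option (α × Bool) → List (α × Bool) → Prop
  | nil : ImageShape a b none []
  | pos_a {q} (h : ∀ z ∈ q.head?, z.1 = a ∨ z = (b, true)) : ImageShape a b (some (a, true)) q
  | neg_a {r} (hA : (a, false) ∉ r.head?) (hb : (b, true) ∉ r.head?) :
      ImageShape a b (some (a, false)) ((b, false) :: (a, false) :: (a, false) :: r)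
  | pos_b {k r} (hk : 0 < k) (hA : (a, false) ∉ r.head?)
      -- prepending `σ̂(a) = a²b` turns `b⁻¹a⁻ᵏr` into `a²⁻ᵏr`, which is just `r` when `k = 2`
      (hshort : k ≤ 2 → r.head? = some (b, true)) :
      ImageShape a b (some (b, true)) ((b, false) :: (replicate k (a, false) ++ r))
  | neg_b {r} (h : ∀ r', r = (a, false) :: r' → (a, false) ∉ r'.head? ∧ (b, true) ∉ r'.head?) :
      ImageShape a b (some (b, false)) ((b, false) :: r)
  | other {c e q} (ha : c ≠ a) (hb : c ≠ b) : ImageShape a b (some (c, e)) ((c, e) :: q)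

variable {a b : α}

theorem inv_b_not_mem_head? (hab : a ≠ b) {q : List (α × Bool)}
    (h : ∀ z ∈ q.head?, z.1 = a ∨ z = (b, true)) : (b, false) ∉ q.head? :=
  fun hz => by simpa [hab.symm] using h _ hz

namespace ImageShape

theorem prepend_pos_a (hab : a ≠ b) {m : Option (α × Bool)} {q : List (α × Bool)}
    (hS : ImageShape a b m q) (hq : IsReduced q) (hm : (a, false) ∉ m) :
    ∃ q', IsReduced q' ∧ mk ((a, true) :: (a, true) :: (b, true) :: q) = mk q' ∧
      ImageShape a b (some (a, true)) q' := by
  cases hS with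
  | nil => exact ⟨_, by simp [isReduced_cons], rfl, .pos_a (by simp)⟩
  | pos_a h =>
    refine ⟨_, ?_, rfl, .pos_a (by simp)⟩
    have hB := inv_b_not_mem_head? hab h
    simp [isReduced_cons, hq, hB]
  | neg_a => simp at hm
  | @pos_b k r hk hA hshort =>
    have hr : IsReduced r := hq.of_cons.right_of_append
    rcases k with _ | _ | _ | j
    · omega
    · obtain ⟨r, rfl⟩ : ∃ r', r = (b, true) :: r' := by
        cases r <;> simp_all
      refine ⟨(a, true) :: (b, true) :: r, by simp_all [isReduced_cons], ?_, .pos_a (by simp)⟩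
      simp [mk_cons]
    · obtain ⟨r, rfl⟩ : ∃ r', r = (b, true) :: r' := by
        cases r <;> simp_all
      exact ⟨(b, true) :: r, hr, by simp [mk_cons], .pos_a (by simp)⟩
    · refine ⟨replicate (j + 1) (a, false) ++ r, ?_, ?_, .pos_a (by simp [replicate_succ])⟩
      · simp only [replicate_succ, cons_append] at hq
        exact hq.of_cons.of_cons.of_cons
      · simp [mk_cons, replicate_succ]
  | @neg_b r h =>
    have hr : IsReduced r := hq.of_cons
    by_cases hA : (a, false) ∈ r.head?
    · obtain ⟨r', rfl⟩ : ∃ r', r = (a, false) :: r' := by cases r <;> simp_all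
      refine ⟨(a, true) :: r', ?_, by simp [mk_cons], .pos_a (by simp)⟩
      simp [isReduced_cons, (h r' rfl).1, hr.of_cons]
    · refine ⟨(a, true) :: (a, true) :: r, ?_, by simp [mk_cons], .pos_a (by simp)⟩
      simp [isReduced_cons, hA, hr]
  | other hca hcb =>
    exact ⟨_, by simp [isReduced_cons, hq, hcb], rfl, .pos_a (by simp)⟩

theorem prepend_neg_a (hab : a ≠ b) {m : Option (α × Bool)} {q : List (α × Bool)}
    (hS : ImageShape a b m q) (hq : IsReduced q) (hm : (a, true) ∉ m) :
    ∃ q', IsReduced q' ∧ mk ((b, false) :: (a, false) :: (a, false) :: q) = mk q' ∧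
      ImageShape a b (some (a, false)) q' := by
  refine ⟨_, ?_, rfl, .neg_a ?_ ?_⟩ <;> cases hS <;> simp_all [isReduced_cons, hab.symm]

theorem prepend_pos_b (hab : a ≠ b) {m : Option (α × Bool)} {q : List (α × Bool)}
    (hS : ImageShape a b m q) (hq : IsReduced q) (hm : (b, false) ∉ m) :
    ∃ q', IsReduced q' ∧ mk ((b, false) :: (a, false) :: (b, true) :: q) = mk q' ∧
      ImageShape a b (some (b, true)) q' := by
  cases hS with
  | nil =>
    exact ⟨_, by simp [isReduced_cons, hab, hab.symm], rfl,
      .pos_b (k := 1) (by simp) (by simp) (by simp)⟩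
  | pos_a h =>
    refine ⟨_, ?_, rfl, .pos_b (k := 1) (by simp) (by simp) (by simp)⟩
    have hB := inv_b_not_mem_head? hab h
    simp [isReduced_cons, hq, hB, hab.symm]
  | @neg_a r hA _ =>
    refine ⟨(b, false) :: (replicate 3 (a, false) ++ r), ?_, by simp [mk_cons],
      .pos_b (by norm_num) hA (by norm_num)⟩
    simp_all [isReduced_cons]
  | @pos_b k r hk hA hshort =>
    obtain ⟨j, rfl⟩ : ∃ j, k = j + 1 := ⟨k - 1, by omega⟩
    refine ⟨(b, false) :: (replicate (j + 2) (a, false) ++ r), ?_,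
      by simp [mk_cons, replicate_succ], .pos_b (by omega) hA fun _ => hshort (by omega)⟩
    simp_all [isReduced_cons, replicate_succ]
  | neg_b => simp at hm
  | other hca hcb =>
    exact ⟨_, by simp [isReduced_cons, hq, hab, hab.symm, hcb], rfl,
      .pos_b (k := 1) (r := (b, true) :: _) (by simp) (by simp) (by simp)⟩

theorem prepend_neg_b (hab : a ≠ b) {m : Option (α × Bool)} {q : List (α × Bool)}
    (hS : ImageShape a b m q) (hq : IsReduced q) (hm : (b, true) ∉ m) :
    ∃ q', IsReduced q' ∧ mk ((b, false) :: (a, true) :: (b, true) :: q) = mk q' ∧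
      ImageShape a b (some (b, false)) q' := by
  cases hS with
  | nil => exact ⟨_, by simp [isReduced_cons, hab, hab.symm], rfl, .neg_b (by simp)⟩
  | pos_a h =>
    have hB := inv_b_not_mem_head? hab h
    exact ⟨_, by simp [isReduced_cons, hq, hB, hab, hab.symm], rfl, .neg_b (by simp)⟩
  | @neg_a r hA hb =>
    refine ⟨(b, false) :: (a, false) :: r, ?_, by simp [mk_cons], .neg_b (by simp_all)⟩
    simp_all [isReduced_cons]
  | pos_b => simp at hm
  | @neg_b r h =>
    by_cases hA : (a, false) ∈ r.head?
    · obtain ⟨r, rfl⟩ : ∃ r', r = (a, false) :: r' := by cases r <;> simp_all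
      obtain ⟨hA', hb'⟩ := h r rfl
      refine ⟨(b, false) :: r, ?_, by simp [mk_cons], .neg_b fun r' hr' => by simp_all⟩
      simp [isReduced_cons, hb', hq.of_cons.of_cons]
    · refine ⟨(b, false) :: (a, true) :: r, ?_, by simp [mk_cons], .neg_b (by simp)⟩
      simp [isReduced_cons, hA, hq.of_cons, hab]
  | other hca hcb =>
    exact ⟨_, by simp [isReduced_cons, hq, hab, hab.symm, hcb], rfl, .neg_b (by simp)⟩

theorem prepend_other {c : α} (e : Bool) (hca : c ≠ a) (hcb : c ≠ b) {m : Option (α × Bool)}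
    {q : List (α × Bool)} (hS : ImageShape a b m q) (hq : IsReduced q) (hm : (c, !e) ∉ m) :
    ∃ q', IsReduced q' ∧ mk ((c, e) :: q) = mk q' ∧ ImageShape a b (some (c, e)) q' := by
  refine ⟨_, isReduced_cons.2 ⟨?_, hq⟩, rfl, .other hca hcb⟩
  cases hS with
  | pos_a h => exact fun hz => by simpa [hca, hcb] using h _ hz
  | _ => simp_all [hcb.symm]

end ImageShape

section

variable [DecidableEq α]

variable (a b) in
def letterImage : α × Bool → List (α × Bool)
  | (x, true) => if x = a then [(a, true), (a, true), (b, true)]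
      else if x = b then [(b, false), (a, false), (b, true)] else [(x, true)]
  | (x, false) => if x = a then [(b, false), (a, false), (a, false)]
      else if x = b then [(b, false), (a, true), (b, true)] else [(x, false)]

theorem ImageShape.prepend (hab : a ≠ b) {m : Option (α × Bool)} {q : List (α × Bool)}
    (hS : ImageShape a b m q) (hq : IsReduced q) (ℓ : α × Bool) (hm : (ℓ.1, !ℓ.2) ∉ m) :
    ∃ q', IsReduced q' ∧ mk (letterImage a b ℓ ++ q) = mk q' ∧ ImageShape a b (some ℓ) q' := by
  obtain ⟨x, e⟩ := ℓ
  by_cases hxa : x = a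
  · subst hxa
    cases e
    · simpa [letterImage] using hS.prepend_neg_a hab hq hm
    · simpa [letterImage] using hS.prepend_pos_a hab hq hm
  by_cases hxb : x = b
  · subst hxb
    cases e
    · simpa [letterImage, hab.symm] using hS.prepend_neg_b hab hq hm
    · simpa [letterImage, hab.symm] using hS.prepend_pos_b hab hq hm
  cases e <;> simpa [letterImage, hxa, hxb] using hS.prepend_other _ hxa hxb hq hm

theorem exists_isReduced_image (hab : a ≠ b) :
    ∀ v : List (α × Bool), IsReduced v →
      ∃ q, IsReduced q ∧ mk (v.flatMap (letterImage a b)) = mk q ∧ ImageShape a b v.head? q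
  | [], _ => ⟨[], .nil, rfl, .nil⟩
  | ℓ :: v, hv => by
    obtain ⟨hm, hv⟩ := isReduced_cons.1 hv
    obtain ⟨q, hq, hvq, hS⟩ := exists_isReduced_image hab v hv
    obtain ⟨q', hq', hq'q, hS'⟩ := hS.prepend hab hq ℓ hm
    exact ⟨q', hq', by rw [flatMap_cons, ← mul_mk, hvq, mul_mk, hq'q], hS'⟩

theorem map_mk_singleton (hab : a ≠ b) (φ : FreeGroup α →* FreeGroup α)
    (h1 : φ (of a) = of a ^ 2 * of b) (h2 : φ (of b) = (of b)⁻¹ * (of a)⁻¹ * of b)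
    (h3 : ∀ c, c ≠ a → c ≠ b → φ (of c) = of c) (ℓ : α × Bool) :
    φ (mk [ℓ]) = mk (letterImage a b ℓ) := by
  obtain ⟨x, e⟩ := ℓ
  by_cases hxa : x = a
  · subst hxa
    cases e <;> simp [letterImage, mk_cons, ← one_eq_mk, h1, pow_two, mul_assoc]
  by_cases hxb : x = b
  · subst hxb
    cases e <;> simp [letterImage, mk_cons, ← one_eq_mk, h2, hab.symm, mul_assoc]
  cases e <;> simp [letterImage, mk_cons, ← one_eq_mk, h3 x hxa hxb, hxa, hxb]

theorem map_mk {φ : FreeGroup α →* FreeGroup α}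
    (hφ : ∀ ℓ, φ (mk [ℓ]) = mk (letterImage a b ℓ)) (L : List (α × Bool)) :
    φ (mk L) = mk (L.flatMap (letterImage a b)) := by
  induction L with
  | nil => simp [← one_eq_mk]
  | cons ℓ L ih =>
    rw [flatMap_cons, ← mul_mk, ← hφ, ← ih, ← _root_.map_mul, mul_mk]
    rfl

theorem head?_toWord_of_mul_map_of_mul (hab : a ≠ b) {φ : FreeGroup α →* FreeGroup α}
    (hφ : ∀ ℓ, φ (mk [ℓ]) = mk (letterImage a b ℓ)) {u : FreeGroup α}
    (hu : (a, false) ∉ u.toWord.head?) :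
    (of b * φ (of a * u)).toWord.head? = some (b, true) := by
  have hv : IsReduced ((a, true) :: u.toWord) := isReduced_cons.2 ⟨hu, isReduced_toWord⟩
  obtain ⟨q, hq, hvq, hS⟩ := exists_isReduced_image hab _ hv
  have hB : (b, false) ∉ q.head? := by
    cases hS with
    | pos_a h => exact inv_b_not_mem_head? hab h
    | _ => contradiction
  have hau : of a * u = mk ((a, true) :: u.toWord) := by
    rw [← singleton_append, ← mul_mk, mk_toWord]; rfl
  rw [hau, map_mk hφ, hvq, of, mul_mk, singleton_append, toWord_mk,
    (isReduced_cons.2 ⟨hB, hq⟩).reduce_eq, head?_cons]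

end

end SigmaHat

/-- Let `σ̂_1 ∈ Aut(F_n)` be the automorphism with `x_1 ↦ x_1^2 x_2`,
`x_2 ↦ x_2⁻¹ x_1⁻¹ x_2`, fixing all other free generators (Wada's type (3)
generator automorphism). If `w ∈ F_n` has reduced word of the form `x_1^2 u` with
`u` a reduced word not beginning with a letter `x_1^{±1}`, then the reduced word of
`σ̂_1(w)` has the same form `x_1^2 u'`, with `u'` not beginning with a letter
`x_1^{±1}`. -/
theorem wada_type3_sigma1hat_preserves_form (n : ℕ) (hn : 2 ≤ n)
    (φ : MulAut (FreeGroup (Fin n)))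
    (hφ1 : φ (FreeGroup.of (⟨0, by omega⟩ : Fin n)) =
      FreeGroup.of (⟨0, by omega⟩ : Fin n) ^ 2 * FreeGroup.of (⟨1, by omega⟩ : Fin n))
    (hφ2 : φ (FreeGroup.of (⟨1, by omega⟩ : Fin n)) =
      (FreeGroup.of (⟨1, by omega⟩ : Fin n))⁻¹ * (FreeGroup.of (⟨0, by omega⟩ : Fin n))⁻¹ *
        FreeGroup.of (⟨1, by omega⟩ : Fin n))
    (hφ3 : ∀ j : Fin n, j ≠ ⟨0, by omega⟩ → j ≠ ⟨1, by omega⟩ →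
      φ (FreeGroup.of j) = FreeGroup.of j)
    (w u : FreeGroup (Fin n))
    (huhead : ∀ p ∈ u.toWord.head?, p.1 ≠ (⟨0, by omega⟩ : Fin n))
    (hw : w = FreeGroup.of (⟨0, by omega⟩ : Fin n) ^ 2 * u) :
    ∃ u' : FreeGroup (Fin n),
      (∀ p ∈ u'.toWord.head?, p.1 ≠ (⟨0, by omega⟩ : Fin n)) ∧
      φ w = FreeGroup.of (⟨0, by omega⟩ : Fin n) ^ 2 * u' := by
  have hab : (⟨0, by omega⟩ : Fin n) ≠ ⟨1, by omega⟩ := by simp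
  have hφ := SigmaHat.map_mk_singleton hab φ.toMonoidHom hφ1 hφ2 hφ3
  have hhead := SigmaHat.head?_toWord_of_mul_map_of_mul hab hφ (fun h => huhead _ h rfl)
  refine ⟨FreeGroup.of ⟨1, by omega⟩ * φ (FreeGroup.of ⟨0, by omega⟩ * u), ?_, ?_⟩
  · intro p hp
    rw [MulEquiv.coe_toMonoidHom] at hhead
    rw [hhead, Option.mem_some_iff] at hp
    exact hp ▸ hab.symm
  · rw [hw, map_mul, map_mul, map_pow, hφ1]
    simp only [pow_two, mul_assoc]
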